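/- arXiv:1206.3637 — 4 statements merged into one kernel-verified Lean document; each statement's English description precedes it below -/
import Mathlib

section
/- Let α ∈ (0,1/2), 0 ≤ a < b, and let g : [a,b] → ℝ be continuous with Λ := ‖g‖_{0;[a,b]} < ∞, and let f : [a,b] → ℝ be measurable with ∫_a^b ( |f(s)|(s−a)^{−α} + ∫_a^s |f(s)−f(u)|(s−u)^{−1−α} du ) ds < ∞. Then the generalized (fractional) Lebesgue–Stieltjes integral ∫_a^b f dg is well defined and there is a constant C depending only on α such that |∫_a^b f(s) dg(s)| ≤ C · Λ · ∫_a^b ( |f(s)|(s−a)^{−α} + ∫_a^s |f(s)−f(u)|(s−u)^{−1−α} du ) ds. -/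
open MeasureTheory Set
open scoped ENNReal

/-- The seminorm `‖g‖_{0;[a,b]}`, valued in `ℝ≥0∞`. -/
noncomputable def zeroNorm (α a b : ℝ) (g : ℝ → ℝ) : ℝ≥0∞ :=
  ⨆ (u : ℝ) (v : ℝ) (_ : a ≤ u) (_ : u < v) (_ : v < b),
    ENNReal.ofReal (|g v - g u| / (v - u) ^ (1 - α)
      + ∫ z in Ioo u v, |g u - g z| / (z - u) ^ (2 - α))

/-- Left-sided fractional derivative `(D^α_{a+} f)(x)`. -/
noncomputable def fracDerivP (α a : ℝ) (f : ℝ → ℝ) (x : ℝ) : ℝ :=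
  (1 / Real.Gamma (1 - α)) *
    (f x / (x - a) ^ α + α * ∫ u in Ioo a x, (f x - f u) / (x - u) ^ (1 + α))

/-- Right-sided fractional derivative `(D^{1-α}_{b-} g_{b-})(x)`. -/
noncomputable def fracDerivM (α b : ℝ) (g : ℝ → ℝ) (x : ℝ) : ℝ :=
  (1 / Real.Gamma α) *
    ((g x - g b) / (b - x) ^ (1 - α) + (1 - α) * ∫ u in Ioo x b, (g x - g u) / (u - x) ^ (2 - α))

/-- Generalized (fractional) Lebesgue–Stieltjes integral `∫_a^b f dg`. -/
noncomputable def glsIntegral (α a b : ℝ) (f g : ℝ → ℝ) : ℝ :=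
  ∫ x in Ioo a b, fracDerivP α a f x * fracDerivM α b g x

/-!
Both fractional derivatives are estimated pointwise. For `a ≤ x < b` the two terms of
`D^{1-α}_{b-} g_{b-}(x)` are the two pieces of the seminorm `‖g‖_{0;[a,b]}` at `u = x`, `v = b`;
the seminorm only controls `v < b`, and the endpoint is reached by continuity of `g` and of the
primitive `v ↦ ∫_x^v`. This bounds `|D^{1-α}_{b-} g_{b-}|` by `2Λ/Γ(α)`, while `|D^α_{a+} f(s)|`
is at most `1/Γ(1-α)` times the integrand on the right-hand side, so the product is integrable
with `C = 2 / (Γ(α) Γ(1-α))`.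
-/

theorem setIntegral_Ioo_le_of_forall_lt {G : ℝ → ℝ} {x b M : ℝ} (hxb : x < b)
    (hG : IntegrableOn G (Ioo x b)) (h : ∀ v ∈ Ioo x b, ∫ u in Ioo x v, G u ≤ M) :
    ∫ u in Ioo x b, G u ≤ M := by
  have hIoo : ∀ v, x ≤ v → ∫ u in x..v, G u = ∫ u in Ioo x v, G u := fun v hv => by
    rw [intervalIntegral.integral_of_le hv, integral_Ioc_eq_integral_Ioo]
  have hprim : ContinuousOn (fun v => ∫ u in x..v, G u) (Icc x b) := by
    rw [← uIcc_of_le hxb.le]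
    refine intervalIntegral.continuousOn_primitive_interval ?_
    rwa [uIcc_of_le hxb.le, integrableOn_Icc_iff_integrableOn_Ioo]
  have hb : b ∈ closure (Ioo x b) := by simp [closure_Ioo hxb.ne, hxb.le]
  rw [← hIoo b hxb.le]
  refine ContinuousWithinAt.closure_le hb ((hprim b (right_mem_Icc.2 hxb.le)).mono
    Ioo_subset_Icc_self) continuousWithinAt_const fun v hv => ?_
  rw [hIoo v hv.1.le]
  exact h v hv

theorem integrable_and_norm_integral_le_of_enorm_le {X E : Type*} [MeasurableSpace X]
    [NormedAddCommGroup E] [NormedSpace ℝ E] {μ : Measure X} {F : X → E} {Ψ : X → ℝ≥0∞}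
    (hF : AEStronglyMeasurable F μ) (hle : ∀ᵐ x ∂μ, ‖F x‖ₑ ≤ Ψ x) (hΨ : ∫⁻ x, Ψ x ∂μ < ⊤) :
    Integrable F μ ∧ ‖∫ x, F x ∂μ‖ ≤ (∫⁻ x, Ψ x ∂μ).toReal := by
  have hlint : ∫⁻ x, ‖F x‖ₑ ∂μ ≤ ∫⁻ x, Ψ x ∂μ := lintegral_mono_ae hle
  refine ⟨⟨hF, hlint.trans_lt hΨ⟩, ?_⟩
  rw [← toReal_enorm]
  exact ENNReal.toReal_mono hΨ.ne ((enorm_integral_le_lintegral_enorm F).trans hlint)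

theorem measurable_setIntegral_Ioo {K : ℝ → ℝ → ℝ} (hK : Measurable (Function.uncurry K))
    {l r : ℝ → ℝ} (hl : Measurable l) (hr : Measurable r) :
    Measurable fun x => ∫ u in Ioo (l x) (r x), K x u := by
  have hind : Measurable fun p : ℝ × ℝ => (Ioo (l p.1) (r p.1)).indicator (K p.1) p.2 := by
    refine Measurable.ite ?_ hK measurable_const
    exact (measurableSet_lt (hl.comp measurable_fst) measurable_snd).inter
      (measurableSet_lt measurable_snd (hr.comp measurable_fst))
  simp_rw [← integral_indicator measurableSet_Ioo]
  exact hind.stronglyMeasurable.integral_prod_right'.measurable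

section RightDerivative

variable {α a b u v : ℝ} {g : ℝ → ℝ}

theorem div_add_setIntegral_le_zeroNorm (hg : zeroNorm α a b g ≠ ⊤) (hu : a ≤ u) (huv : u < v)
    (hvb : v < b) :
    |g v - g u| / (v - u) ^ (1 - α) + ∫ z in Ioo u v, |g u - g z| / (z - u) ^ (2 - α)
      ≤ (zeroNorm α a b g).toReal := by
  rw [← ENNReal.ofReal_le_iff_le_toReal hg, zeroNorm]
  exact le_iSup_of_le u <| le_iSup_of_le v <| le_iSup_of_le hu <| le_iSup_of_le huv <|
    le_iSup_of_le hvb le_rfl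

theorem setIntegral_abs_sub_div_rpow_nonneg (u v : ℝ) :
    0 ≤ ∫ z in Ioo u v, |g u - g z| / (z - u) ^ (2 - α) :=
  setIntegral_nonneg measurableSet_Ioo fun _ hz =>
    div_nonneg (abs_nonneg _) (Real.rpow_nonneg (sub_nonneg.2 hz.1.le) _)

theorem abs_sub_le_zeroNorm_mul_rpow (hg : zeroNorm α a b g ≠ ⊤) (hu : a ≤ u) (huv : u < v)
    (hvb : v < b) : |g v - g u| ≤ (zeroNorm α a b g).toReal * (v - u) ^ (1 - α) := by
  have hterm := div_add_setIntegral_le_zeroNorm hg hu huv hvb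
  have hint := setIntegral_abs_sub_div_rpow_nonneg (g := g) (α := α) u v
  rw [← div_le_iff₀ (Real.rpow_pos_of_pos (sub_pos.2 huv) _)]
  linarith

theorem setIntegral_le_zeroNorm (hg : zeroNorm α a b g ≠ ⊤) (hu : a ≤ u) (huv : u < v)
    (hvb : v < b) :
    ∫ z in Ioo u v, |g u - g z| / (z - u) ^ (2 - α) ≤ (zeroNorm α a b g).toReal := by
  have hterm := div_add_setIntegral_le_zeroNorm hg hu huv hvb
  have hquot : 0 ≤ |g v - g u| / (v - u) ^ (1 - α) :=
    div_nonneg (abs_nonneg _) (Real.rpow_nonneg (sub_pos.2 huv).le _)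
  linarith

theorem abs_sub_right_le_zeroNorm_mul_rpow (hg : zeroNorm α a b g ≠ ⊤)
    (hgb : ContinuousWithinAt g (Icc a b) b) (hu : a ≤ u) (hub : u < b) :
    |g b - g u| ≤ (zeroNorm α a b g).toReal * (b - u) ^ (1 - α) := by
  have hb : b ∈ closure (Ioo u b) := by simp [closure_Ioo hub.ne, hub.le]
  have hgu : ContinuousWithinAt (fun v => |g v - g u|) (Ioo u b) b :=
    ((hgb.mono fun _ hz => ⟨hu.trans hz.1.le, hz.2.le⟩).sub continuousWithinAt_const).abs
  have hrpow : ContinuousWithinAt (fun v => (zeroNorm α a b g).toReal * (v - u) ^ (1 - α))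
      (Ioo u b) b :=
    (continuousAt_const.mul ((continuousAt_id.sub continuousAt_const).rpow_const
      (Or.inl (sub_pos.2 hub).ne'))).continuousWithinAt
  exact hgu.closure_le hb hrpow fun v hv => abs_sub_le_zeroNorm_mul_rpow hg hu hv.1 hv.2

theorem setIntegral_right_le_zeroNorm (hg : zeroNorm α a b g ≠ ⊤) (hu : a ≤ u) (hub : u < b) :
    ∫ z in Ioo u b, |g u - g z| / (z - u) ^ (2 - α) ≤ (zeroNorm α a b g).toReal := by
  by_cases hint : IntegrableOn (fun z => |g u - g z| / (z - u) ^ (2 - α)) (Ioo u b)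
  · exact setIntegral_Ioo_le_of_forall_lt hub hint fun v hv =>
      setIntegral_le_zeroNorm hg hu hv.1 hv.2
  · rw [integral_undef hint]
    exact ENNReal.toReal_nonneg

theorem abs_fracDerivM_le (hα0 : 0 < α) (hα1 : α ≤ 1) (hg : zeroNorm α a b g ≠ ⊤)
    (hgb : ContinuousWithinAt g (Icc a b) b) {x : ℝ} (hx : a ≤ x) (hxb : x < b) :
    |fracDerivM α b g x| ≤ 2 / Real.Gamma α * (zeroNorm α a b g).toReal := by
  set Λ := (zeroNorm α a b g).toReal
  set J := ∫ u in Ioo x b, (g x - g u) / (u - x) ^ (2 - α)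
  have hpow : 0 < (b - x) ^ (1 - α) := Real.rpow_pos_of_pos (sub_pos.2 hxb) _
  have hquot : |g x - g b| / (b - x) ^ (1 - α) ≤ Λ := by
    rw [div_le_iff₀ hpow, abs_sub_comm]
    exact abs_sub_right_le_zeroNorm_mul_rpow hg hgb hx hxb
  have hJ : |J| ≤ Λ := by
    refine abs_integral_le_integral_abs.trans_eq (setIntegral_congr_fun measurableSet_Ioo
      fun u hu => ?_) |>.trans (setIntegral_right_le_zeroNorm hg hx hxb)
    rw [abs_div, abs_of_pos (Real.rpow_pos_of_pos (sub_pos.2 hu.1) _)]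
  have hΓ : 0 < Real.Gamma α := Real.Gamma_pos_of_pos hα0
  calc |fracDerivM α b g x|
      = 1 / Real.Gamma α * |(g x - g b) / (b - x) ^ (1 - α) + (1 - α) * J| := by
        rw [fracDerivM, abs_mul, abs_of_pos (one_div_pos.2 hΓ)]
    _ ≤ 1 / Real.Gamma α * (|g x - g b| / (b - x) ^ (1 - α) + (1 - α) * |J|) := by
        gcongr
        refine (abs_add_le _ _).trans_eq ?_
        rw [abs_div, abs_of_pos hpow, abs_mul, abs_of_nonneg (sub_nonneg.2 hα1)]
    _ ≤ 1 / Real.Gamma α * (Λ + Λ) := by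
        gcongr
        nlinarith [abs_nonneg J]
    _ = 2 / Real.Gamma α * Λ := by ring

theorem fracDerivM_congr {g' : ℝ → ℝ} {x : ℝ} (hxb : x ≤ b) (h : EqOn g g' (Icc x b)) :
    fracDerivM α b g x = fracDerivM α b g' x := by
  have hint : ∫ u in Ioo x b, (g x - g u) / (u - x) ^ (2 - α)
      = ∫ u in Ioo x b, (g' x - g' u) / (u - x) ^ (2 - α) :=
    setIntegral_congr_fun measurableSet_Ioo fun u hu => by
      rw [h (left_mem_Icc.2 hxb), h (Ioo_subset_Icc_self hu)]
  rw [fracDerivM, fracDerivM, hint, h (left_mem_Icc.2 hxb), h (right_mem_Icc.2 hxb)]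

theorem measurable_fracDerivM (hg : Measurable g) : Measurable (fracDerivM α b g) := by
  unfold fracDerivM
  have hJ := measurable_setIntegral_Ioo (K := fun x u => (g x - g u) / (u - x) ^ (2 - α))
    (l := id) (r := fun _ => b) (by fun_prop) measurable_id measurable_const
  fun_prop

theorem aestronglyMeasurable_fracDerivM (hab : a ≤ b) (hg : ContinuousOn g (Icc a b)) :
    AEStronglyMeasurable (fracDerivM α b g) (volume.restrict (Ioo a b)) := by
  set g' := IccExtend hab ((Icc a b).domRestrict g)
  have hg' : Continuous g' := hg.domRestrict.Icc_extend'
  refine (measurable_fracDerivM hg'.measurable).aestronglyMeasurable.congr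
    (ae_restrict_of_forall_mem measurableSet_Ioo fun x hx => fracDerivM_congr hx.2.le ?_)
  exact fun y hy => IccExtend_of_mem hab _ ⟨hx.1.le.trans hy.1, hy.2⟩

end RightDerivative

section LeftDerivative

variable {α a : ℝ} {f : ℝ → ℝ}

noncomputable def fracDerivPMajorant (α a : ℝ) (f : ℝ → ℝ) (s : ℝ) : ℝ≥0∞ :=
  ENNReal.ofReal (|f s| * (s - a) ^ (-α))
    + ∫⁻ u in Ioo a s, ENNReal.ofReal (|f s - f u| * (s - u) ^ (-1 - α))

theorem enorm_fracDerivP_le (hα : |α| ≤ 1) {x : ℝ} (hx : a < x) :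
    ‖fracDerivP α a f x‖ₑ ≤ ‖1 / Real.Gamma (1 - α)‖ₑ * fracDerivPMajorant α a f x := by
  set I := ∫ u in Ioo a x, (f x - f u) / (x - u) ^ (1 + α)
  have hfirst : ‖f x / (x - a) ^ α‖ₑ = ENNReal.ofReal (|f x| * (x - a) ^ (-α)) := by
    rw [Real.enorm_eq_ofReal_abs, abs_div, abs_of_pos (Real.rpow_pos_of_pos (sub_pos.2 hx) _),
      Real.rpow_neg (sub_pos.2 hx).le, div_eq_mul_inv]
  have hI : ‖I‖ₑ ≤ ∫⁻ u in Ioo a x, ENNReal.ofReal (|f x - f u| * (x - u) ^ (-1 - α)) := by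
    refine (enorm_integral_le_lintegral_enorm _).trans_eq
      (setLIntegral_congr_fun measurableSet_Ioo fun u hu => ?_)
    have hxu : 0 < x - u := sub_pos.2 hu.2
    rw [Real.enorm_eq_ofReal_abs, abs_div, abs_of_pos (Real.rpow_pos_of_pos hxu _),
      div_eq_mul_inv, ← Real.rpow_neg hxu.le, neg_add']
  have hαI : ‖α * I‖ₑ ≤ ‖I‖ₑ := by
    rw [enorm_mul]
    refine mul_le_of_le_one_left' ?_
    rwa [Real.enorm_eq_ofReal_abs, ENNReal.ofReal_le_one]
  rw [fracDerivP, enorm_mul]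
  gcongr
  exact (enorm_add_le _ _).trans (add_le_add hfirst.le (hαI.trans hI))

theorem measurable_fracDerivP (hf : Measurable f) : Measurable (fracDerivP α a f) := by
  unfold fracDerivP
  have hI := measurable_setIntegral_Ioo (K := fun x u => (f x - f u) / (x - u) ^ (1 + α))
    (l := fun _ => a) (r := id) (by fun_prop) measurable_const measurable_id
  fun_prop

end LeftDerivative

theorem enorm_fracDerivP_mul_fracDerivM_le {α a b x : ℝ} {f g : ℝ → ℝ} (hα0 : 0 < α)
    (hα1 : α < 1) (hg : zeroNorm α a b g ≠ ⊤) (hgb : ContinuousWithinAt g (Icc a b) b)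
    (hx : x ∈ Ioo a b) :
    ‖fracDerivP α a f x * fracDerivM α b g x‖ₑ
      ≤ ENNReal.ofReal (2 / (Real.Gamma α * Real.Gamma (1 - α)) * (zeroNorm α a b g).toReal)
          * fracDerivPMajorant α a f x := by
  have hM := abs_fracDerivM_le hα0 hα1.le hg hgb hx.1.le hx.2
  have hP := enorm_fracDerivP_le (α := α) (f := f) (abs_le.2 ⟨by linarith, hα1.le⟩) hx.1
  have hΓ : 0 < Real.Gamma α := Real.Gamma_pos_of_pos hα0
  have hΓ' : 0 < Real.Gamma (1 - α) := Real.Gamma_pos_of_pos (sub_pos.2 hα1)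
  rw [Real.enorm_of_nonneg (one_div_pos.2 hΓ').le] at hP
  calc ‖fracDerivP α a f x * fracDerivM α b g x‖ₑ
      ≤ ENNReal.ofReal (2 / Real.Gamma α * (zeroNorm α a b g).toReal)
          * (ENNReal.ofReal (1 / Real.Gamma (1 - α)) * fracDerivPMajorant α a f x) := by
        rw [enorm_mul, mul_comm, Real.enorm_eq_ofReal_abs]
        gcongr
    _ = _ := by
        rw [← mul_assoc, ← ENNReal.ofReal_mul (by positivity)]
        congr 2
        field_simp

theorem gls_integral_bound (α : ℝ) (hα : α ∈ Set.Ioo (0 : ℝ) (1 / 2)) :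
    ∃ C : ℝ, 0 < C ∧ ∀ (a b : ℝ) (f g : ℝ → ℝ),
      0 ≤ a → a < b →
      ContinuousOn g (Set.Icc a b) →
      zeroNorm α a b g < ⊤ →
      Measurable f →
      (∫⁻ s in Ioo a b,
          (ENNReal.ofReal (|f s| * (s - a) ^ (-α))
            + ∫⁻ u in Ioo a s, ENNReal.ofReal (|f s - f u| * (s - u) ^ (-1 - α)))) < ⊤ →
      IntegrableOn (fun x => fracDerivP α a f x * fracDerivM α b g x) (Ioo a b) ∧
        |glsIntegral α a b f g| ≤
          C * (zeroNorm α a b g).toReal *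
            (∫⁻ s in Ioo a b,
              (ENNReal.ofReal (|f s| * (s - a) ^ (-α))
                + ∫⁻ u in Ioo a s,
                    ENNReal.ofReal (|f s - f u| * (s - u) ^ (-1 - α)))).toReal := by
  obtain ⟨hα0, hα2⟩ := hα
  have hΓ : 0 < Real.Gamma α := Real.Gamma_pos_of_pos hα0
  have hΓ' : 0 < Real.Gamma (1 - α) := Real.Gamma_pos_of_pos (by linarith)
  refine ⟨2 / (Real.Gamma α * Real.Gamma (1 - α)), by positivity, ?_⟩
  intro a b f g _ hab hg hzn hf hF
  obtain ⟨hint, hle⟩ := integrable_and_norm_integral_le_of_enorm_le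
    ((measurable_fracDerivP hf).aestronglyMeasurable.mul
      (aestronglyMeasurable_fracDerivM hab.le hg))
    (ae_restrict_of_forall_mem measurableSet_Ioo fun x hx =>
      enorm_fracDerivP_mul_fracDerivM_le hα0 (by linarith) hzn.ne
        (hg b (right_mem_Icc.2 hab.le)) hx)
    (by
      rw [lintegral_const_mul' _ _ ENNReal.ofReal_ne_top]
      exact ENNReal.mul_lt_top ENNReal.ofReal_lt_top hF)
  refine ⟨hint, hle.trans_eq ?_⟩
  rw [lintegral_const_mul' _ _ ENNReal.ofReal_ne_top, ENNReal.toReal_mul,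
    ENNReal.toReal_ofReal (by positivity)]
  rfl
end

section
/- Let α ∈ (0,1/2), λ ∈ (1−α, 1], 0 ≤ a < b, and let g : [a,b] → ℝ satisfy |g(v) − g(u)| ≤ L (v−u)^λ for all a ≤ u ≤ v ≤ b. Then ‖g‖_{0;[a,b]} ≤ (1 + 1/(λ+α−1)) · L · (b−a)^{λ+α−1}. In particular, every Hölder continuous function of order λ > 1−α on [a,b] has ‖g‖_{0;[a,b]} < ∞. -/
open MeasureTheory Set
open scoped ENNReal

/-! Both terms of `‖g‖_{0;[a,b]}` are controlled by the Hölder bound `|g z - g u| ≤ L (z - u)^λ`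
alone: dividing by `(v - u)^{1-α}` leaves `L (v - u)^{λ+α-1}`, and dividing by `(z - u)^{2-α}`
leaves `L (z - u)^{λ+α-2}`, which is integrable at `z = u` exactly because `λ + α - 1 > 0` and
integrates to `L (v - u)^{λ+α-1} / (λ+α-1)`. Finally `v - u ≤ b - a`. -/

lemma div_rpow_le_mul_rpow_sub {c L x s t : ℝ} (hx : 0 < x) (h : c ≤ L * x ^ s) :
    c / x ^ t ≤ L * x ^ (s - t) := by
  rw [div_le_iff₀ (Real.rpow_pos_of_pos hx t), mul_assoc, ← Real.rpow_add hx, sub_add_cancel]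
  exact h

lemma intervalIntegrable_sub_rpow {u v r : ℝ} (hr : 0 < r) :
    IntervalIntegrable (fun z => (z - u) ^ (r - 1)) volume u v := by
  simpa using
    (intervalIntegral.intervalIntegrable_rpow' (a := u - u) (b := v - u)
      (by linarith : -1 < r - 1)).comp_sub_right u

lemma integral_Ioo_sub_rpow {u v r : ℝ} (huv : u ≤ v) (hr : 0 < r) :
    ∫ z in Ioo u v, (z - u) ^ (r - 1) = (v - u) ^ r / r := by
  rw [← integral_Ioc_eq_integral_Ioo, ← intervalIntegral.integral_of_le huv,
    intervalIntegral.integral_comp_sub_right (fun x => x ^ (r - 1)) u, sub_self,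
    integral_rpow (Or.inl (by linarith)), sub_add_cancel, Real.zero_rpow hr.ne', sub_zero]

lemma integral_abs_sub_div_rpow_le_of_holder {g : ℝ → ℝ} {L lam p u v : ℝ} (huv : u ≤ v)
    (hp : 0 < lam - p + 1) (hg : ∀ z ∈ Ioo u v, |g z - g u| ≤ L * (z - u) ^ lam) :
    ∫ z in Ioo u v, |g u - g z| / (z - u) ^ p ≤
      L * ((v - u) ^ (lam - p + 1) / (lam - p + 1)) := by
  have hpointwise : ∀ z ∈ Ioo u v,
      |g u - g z| / (z - u) ^ p ≤ L * (z - u) ^ (lam - p + 1 - 1) := fun z hz => by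
    rw [add_sub_cancel_right, abs_sub_comm]
    exact div_rpow_le_mul_rpow_sub (sub_pos.mpr hz.1) (hg z hz)
  have hdom : IntegrableOn (fun z => L * (z - u) ^ (lam - p + 1 - 1)) (Ioo u v) :=
    (((intervalIntegrable_sub_rpow hp).const_mul L).1).mono_set Ioo_subset_Ioc_self
  calc ∫ z in Ioo u v, |g u - g z| / (z - u) ^ p
      ≤ ∫ z in Ioo u v, L * (z - u) ^ (lam - p + 1 - 1) :=
        setIntegral_mono_of_nonneg
          (fun z hz => div_nonneg (abs_nonneg _) (Real.rpow_nonneg (sub_nonneg.mpr hz.1.le) _))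
          hpointwise hdom
    _ = L * ((v - u) ^ (lam - p + 1) / (lam - p + 1)) := by
        rw [integral_const_mul, integral_Ioo_sub_rpow huv hp]

theorem zeroNorm_le_of_holder_general (α lam L a b : ℝ) (g : ℝ → ℝ)
    (hlam : lam ∈ Set.Ioc (1 - α) 1)
    (hg : ∀ u v : ℝ, a ≤ u → u ≤ v → v ≤ b → |g v - g u| ≤ L * (v - u) ^ lam) :
    zeroNorm α a b g ≤
      ENNReal.ofReal ((1 + 1 / (lam + α - 1)) * L * (b - a) ^ (lam + α - 1)) := by
  set E := lam + α - 1
  have hE : 0 < E := by linarith [hlam.1]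
  refine iSup_le fun u => iSup_le fun v => iSup_le fun hau => iSup_le fun huv =>
    iSup_le fun hvb => ENNReal.ofReal_le_ofReal ?_
  have hvu : 0 < v - u := sub_pos.mpr huv
  have hL : 0 ≤ L := nonneg_of_mul_nonneg_left ((abs_nonneg _).trans (hg u v hau huv.le hvb.le))
    (Real.rpow_pos_of_pos hvu lam)
  have hincrement := div_rpow_le_mul_rpow_sub (t := 1 - α) hvu (hg u v hau huv.le hvb.le)
  have hintegral := integral_abs_sub_div_rpow_le_of_holder (p := 2 - α) huv.le
    (by linarith) fun z hz => hg u z hau hz.1.le (by linarith [hz.2])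
  rw [show lam - (1 - α) = E by ring] at hincrement
  rw [show lam - (2 - α) + 1 = E by ring] at hintegral
  calc |g v - g u| / (v - u) ^ (1 - α) + ∫ z in Ioo u v, |g u - g z| / (z - u) ^ (2 - α)
      ≤ L * (v - u) ^ E + L * ((v - u) ^ E / E) := add_le_add hincrement hintegral
    _ = (1 + 1 / E) * L * (v - u) ^ E := by ring
    _ ≤ (1 + 1 / E) * L * (b - a) ^ E := by gcongr

theorem zeroNorm_le_of_holder (α lam L a b : ℝ) (g : ℝ → ℝ)
    (hα : α ∈ Set.Ioo (0 : ℝ) (1 / 2)) (hlam : lam ∈ Set.Ioc (1 - α) 1)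
    (ha : 0 ≤ a) (hab : a < b)
    (hg : ∀ u v : ℝ, a ≤ u → u ≤ v → v ≤ b → |g v - g u| ≤ L * (v - u) ^ lam) :
    zeroNorm α a b g ≤
      ENNReal.ofReal ((1 + 1 / (lam + α - 1)) * L * (b - a) ^ (lam + α - 1)) :=
  zeroNorm_le_of_holder_general α lam L a b g hlam hg
end

section
/- Let α ∈ (0,1), γ ∈ (α,1], 0 ≤ a < b, and let f : [a,b] → ℝ be piecewise Hölder continuous of order γ, i.e. there exist points a = s_0 < s_1 < … < s_m = b such that f is Hölder continuous of order γ on each interval [s_{i}, s_{i+1}) and f has left limits at each s_i. Then D^α_{a+} f ∈ L^1[a,b], i.e. ∫_a^b ( |f(x)|(x−a)^{−α} + ∫_a^x |f(x) − f(u)| (x−u)^{−1−α} du ) dx < ∞. -/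
/-!
`f` is bounded, say by `M`, being Hölder on each of finitely many pieces. Fix a piece `[c, d)`
and `x ∈ (c, d)`, and split the inner integral at `c`. For `u < c` only boundedness is available,
and `∫_{-∞}^{c} (x - u)^(-1-α) du = (x - c)^(-α) / α`. For `u ∈ [c, x)` the Hölder bound turns the
integrand into `L (x - u)^(γ-1-α)`, integrable uniformly in `x` because `γ > α`. Since also
`(x - a)^(-α) ≤ (x - c)^(-α)`, the integrand in `x` is at most `K (x - c)^(-α) + C` on `(c, d)`,
which is integrable because `α < 1`.
-/

open MeasureTheory Set
open scoped ENNReal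

/-- `f` is piecewise Hölder continuous of order `γ` on `[a,b]`: there is a partition
`a = s_0 < s_1 < … < s_m = b` such that `f` is Hölder of order `γ` on each `[s_i, s_{i+1})`
and `f` has a left limit at each `s_i`, `i ≥ 1`. -/
def PiecewiseHolder (γ a b : ℝ) (f : ℝ → ℝ) : Prop :=
  ∃ (m : ℕ) (s : ℕ → ℝ), 0 < m ∧ s 0 = a ∧ s m = b ∧
    (∀ i < m, s i < s (i + 1)) ∧
    (∀ i < m, ∃ L : ℝ, ∀ x ∈ Set.Ico (s i) (s (i + 1)), ∀ y ∈ Set.Ico (s i) (s (i + 1)),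
      |f x - f y| ≤ L * |x - y| ^ γ) ∧
    (∀ i, 0 < i → i ≤ m → ∃ l : ℝ,
      Filter.Tendsto f (nhdsWithin (s i) (Set.Iio (s i))) (nhds l))

lemma setLIntegral_comp_const_sub (x : ℝ) (g : ℝ → ℝ≥0∞) (s : Set ℝ) :
    ∫⁻ u in s, g (x - u) = ∫⁻ t in (x - ·) '' s, g t :=
  (Measure.measurePreserving_sub_left volume x).setLIntegral_comp_emb
    (MeasurableEquiv.subLeft x).measurableEmbedding g s

lemma integrableOn_Ioo_sub_rpow {r : ℝ} (hr : -1 < r) (c d : ℝ) :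
    IntegrableOn (fun x : ℝ => (x - c) ^ r) (Ioo c d) := by
  have h := (intervalIntegral.intervalIntegrable_rpow' hr (a := 0) (b := d - c)).comp_sub_right c
  rw [zero_add, sub_add_cancel] at h
  exact h.def'.mono_set (Ioo_subset_Ioc_self.trans Ioc_subset_uIoc)

lemma lintegral_Ioo_rpow_lt_top {r : ℝ} (hr : -1 < r) (B : ℝ) :
    ∫⁻ t in Ioo 0 B, ENNReal.ofReal (t ^ r) < ∞ := by
  simpa using (integrableOn_Ioo_sub_rpow hr 0 B).lintegral_lt_top

lemma lintegral_Ioi_rpow {r : ℝ} (hr : r < -1) {A : ℝ} (hA : 0 < A) :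
    ∫⁻ t in Ioi A, ENNReal.ofReal (t ^ r) = ENNReal.ofReal (-A ^ (r + 1) / (r + 1)) := by
  rw [← integral_Ioi_rpow_of_lt hr hA, ofReal_integral_eq_lintegral_ofReal
    (integrableOn_Ioi_rpow_of_lt hr hA)]
  filter_upwards [ae_restrict_mem measurableSet_Ioi] with t ht
  exact Real.rpow_nonneg (hA.trans ht).le r

lemma lintegral_biUnion_finset_lt_top {X ι : Type*} [MeasurableSpace X] {μ : Measure X}
    {s : Finset ι} {t : ι → Set X} {g : X → ℝ≥0∞} (h : ∀ i ∈ s, ∫⁻ x in t i, g x ∂μ < ∞) :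
    ∫⁻ x in ⋃ i ∈ s, t i, g x ∂μ < ∞ := by
  rw [← Finset.set_biUnion_coe, biUnion_eq_iUnion]
  refine (lintegral_iUnion_le _ _).trans_lt ?_
  rw [tsum_fintype]
  exact ENNReal.sum_lt_top.mpr fun i _ => h i i.2

lemma isBounded_image_Ico_of_holder {f : ℝ → ℝ} {γ c d L : ℝ} (hγ : 0 ≤ γ)
    (hL : ∀ x ∈ Ico c d, ∀ y ∈ Ico c d, |f x - f y| ≤ L * |x - y| ^ γ) :
    Bornology.IsBounded (f '' Ico c d) := by
  rcases (Ico c d).eq_empty_or_nonempty with h | ⟨y, hy⟩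
  · simp [h]
  refine isBounded_iff_forall_norm_le.2 ⟨|f y| + |L| * (d - c) ^ γ, ?_⟩
  rintro _ ⟨x, hx, rfl⟩
  have hxy : |x - y| ≤ d - c :=
    abs_sub_le_iff.2 ⟨by linarith [hx.2, hy.1], by linarith [hx.1, hy.2]⟩
  calc ‖f x‖ ≤ |f y| + |f x - f y| := by
        rw [Real.norm_eq_abs]; linarith [abs_sub_abs_le_abs_sub (f x) (f y)]
    _ ≤ |f y| + |L| * (d - c) ^ γ := by
        gcongr
        exact (hL x hx y hy).trans (mul_le_mul (le_abs_self L)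
          (Real.rpow_le_rpow (abs_nonneg _) hxy hγ) (by positivity) (abs_nonneg L))

noncomputable def fracDerivMajorant (α a : ℝ) (f : ℝ → ℝ) (x : ℝ) : ℝ≥0∞ :=
  ENNReal.ofReal (|f x| * (x - a) ^ (-α))
    + ∫⁻ u in Ioo a x, ENNReal.ofReal (|f x - f u| * (x - u) ^ (-1 - α))

section Piece

variable {α γ a c d x M L : ℝ} {f : ℝ → ℝ}

lemma lintegral_Ioo_abs_sub_mul_rpow_le_of_bounded (hα : 0 < α) (hcx : c < x) (hM0 : 0 ≤ M)
    (hM : ∀ u ∈ Ioo a c, |f x - f u| ≤ 2 * M) :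
    ∫⁻ u in Ioo a c, ENNReal.ofReal (|f x - f u| * (x - u) ^ (-1 - α))
      ≤ ENNReal.ofReal (2 * M * ((x - c) ^ (-α) / α)) := by
  have hx : ∀ u ∈ Ioo a c, ENNReal.ofReal (|f x - f u| * (x - u) ^ (-1 - α))
      ≤ ENNReal.ofReal (2 * M) * ENNReal.ofReal ((x - u) ^ (-1 - α)) := fun u hu => by
    rw [← ENNReal.ofReal_mul (by positivity)]
    gcongr
    · exact Real.rpow_nonneg (by linarith [hu.2]) _
    · exact hM u hu
  calc ∫⁻ u in Ioo a c, ENNReal.ofReal (|f x - f u| * (x - u) ^ (-1 - α))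
      ≤ ∫⁻ u in Ioo a c, ENNReal.ofReal (2 * M) * ENNReal.ofReal ((x - u) ^ (-1 - α)) :=
        setLIntegral_mono' measurableSet_Ioo hx
    _ ≤ ENNReal.ofReal (2 * M) * ∫⁻ u in Iio c, ENNReal.ofReal ((x - u) ^ (-1 - α)) := by
        rw [lintegral_const_mul' _ _ ENNReal.ofReal_ne_top]
        gcongr
        exact Ioo_subset_Iio_self
    _ = ENNReal.ofReal (2 * M * ((x - c) ^ (-α) / α)) := by
        rw [setLIntegral_comp_const_sub x (fun t => ENNReal.ofReal (t ^ (-1 - α))),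
          image_const_sub_Iio, lintegral_Ioi_rpow (by linarith) (sub_pos.2 hcx),
          ← ENNReal.ofReal_mul (by positivity), show -1 - α + 1 = -α by ring, neg_div_neg_eq]

lemma lintegral_Ico_abs_sub_mul_rpow_le_of_holder (hxd : x ≤ d)
    (hL : ∀ u ∈ Ico c x, |f x - f u| ≤ L * |x - u| ^ γ) :
    ∫⁻ u in Ico c x, ENNReal.ofReal (|f x - f u| * (x - u) ^ (-1 - α))
      ≤ ENNReal.ofReal L * ∫⁻ t in Ioo 0 (d - c), ENNReal.ofReal (t ^ (γ - 1 - α)) := by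
  have hx : ∀ u ∈ Ico c x, ENNReal.ofReal (|f x - f u| * (x - u) ^ (-1 - α))
      ≤ ENNReal.ofReal L * ENNReal.ofReal ((x - u) ^ (γ - 1 - α)) := fun u hu => by
    have hxu : 0 < x - u := sub_pos.2 hu.2
    rw [← ENNReal.ofReal_mul' (Real.rpow_nonneg hxu.le _),
      show γ - 1 - α = γ + (-1 - α) by ring, Real.rpow_add hxu, ← mul_assoc]
    gcongr
    simpa [abs_of_pos hxu] using hL u hu
  calc ∫⁻ u in Ico c x, ENNReal.ofReal (|f x - f u| * (x - u) ^ (-1 - α))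
      ≤ ∫⁻ u in Ico c x, ENNReal.ofReal L * ENNReal.ofReal ((x - u) ^ (γ - 1 - α)) :=
        setLIntegral_mono' measurableSet_Ico hx
    _ = ENNReal.ofReal L * ∫⁻ u in Ioo c x, ENNReal.ofReal ((x - u) ^ (γ - 1 - α)) := by
        rw [lintegral_const_mul' _ _ ENNReal.ofReal_ne_top, setLIntegral_congr Ioo_ae_eq_Ico]
    _ ≤ ENNReal.ofReal L * ∫⁻ t in Ioo 0 (d - c), ENNReal.ofReal (t ^ (γ - 1 - α)) := by
        rw [setLIntegral_comp_const_sub x (fun t => ENNReal.ofReal (t ^ (γ - 1 - α))),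
          image_const_sub_Ioo, sub_self]
        gcongr

lemma fracDerivMajorant_le (hα : 0 < α) (hac : a ≤ c) (hx : x ∈ Ioo c d)
    (hM : ∀ y ∈ Ico a d, |f y| ≤ M)
    (hL : ∀ y ∈ Ico c d, ∀ z ∈ Ico c d, |f y - f z| ≤ L * |y - z| ^ γ) :
    fracDerivMajorant α a f x ≤ ENNReal.ofReal ((M + 2 * M / α) * (x - c) ^ (-α))
      + ENNReal.ofReal L * ∫⁻ t in Ioo 0 (d - c), ENNReal.ofReal (t ^ (γ - 1 - α)) := by
  obtain ⟨hcx, hxd⟩ := hx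
  have hxM : |f x| ≤ M := hM x ⟨hac.trans hcx.le, hxd⟩
  have hM0 : 0 ≤ M := (abs_nonneg _).trans hxM
  have hsingular : ENNReal.ofReal (|f x| * (x - a) ^ (-α))
      ≤ ENNReal.ofReal (M * (x - c) ^ (-α)) := by
    refine ENNReal.ofReal_le_ofReal (mul_le_mul hxM ?_ (Real.rpow_nonneg (by linarith) _) hM0)
    exact Real.rpow_le_rpow_of_nonpos (sub_pos.2 hcx) (sub_le_sub_left hac x) (neg_nonpos.2 hα.le)
  have hfar := lintegral_Ioo_abs_sub_mul_rpow_le_of_bounded (f := f) (a := a) hα hcx hM0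
    fun u hu => (abs_sub _ _).trans (by linarith [hM u ⟨hu.1.le, hu.2.trans (hcx.trans hxd)⟩])
  have hnear := lintegral_Ico_abs_sub_mul_rpow_le_of_holder (α := α) hxd.le fun u hu =>
    hL x ⟨hcx.le, hxd⟩ u ⟨hu.1, hu.2.trans hxd⟩
  calc fracDerivMajorant α a f x
      ≤ ENNReal.ofReal (M * (x - c) ^ (-α)) + (ENNReal.ofReal (2 * M * ((x - c) ^ (-α) / α))
        + ENNReal.ofReal L * ∫⁻ t in Ioo 0 (d - c), ENNReal.ofReal (t ^ (γ - 1 - α))) := by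
        refine add_le_add hsingular ?_
        calc _ ≤ _ := lintegral_mono_set (Ioo_subset_Ioo_union_Ico (b := c))
          _ ≤ _ := lintegral_union_le _ _ _
          _ ≤ _ := add_le_add hfar hnear
    _ = _ := by
        rw [← add_assoc, ← ENNReal.ofReal_add (by positivity) (by positivity)]
        congr 2
        field_simp

lemma lintegral_Ico_fracDerivMajorant_lt_top (hα : α ∈ Ioo 0 1) (hαγ : α < γ) (hac : a ≤ c)
    (hM : ∀ y ∈ Ico a d, |f y| ≤ M)
    (hL : ∀ y ∈ Ico c d, ∀ z ∈ Ico c d, |f y - f z| ≤ L * |y - z| ^ γ) :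
    ∫⁻ x in Ico c d, fracDerivMajorant α a f x < ∞ := by
  rw [← setLIntegral_congr Ioo_ae_eq_Ico]
  refine (setLIntegral_mono' measurableSet_Ioo
    fun x hx => fracDerivMajorant_le hα.1 hac hx hM hL).trans_lt ?_
  rw [lintegral_add_right _ measurable_const, setLIntegral_const, Real.volume_Ioo]
  have hJ := lintegral_Ioo_rpow_lt_top (r := γ - 1 - α) (by linarith) (d - c)
  exact ENNReal.add_lt_top.2
    ⟨((integrableOn_Ioo_sub_rpow (by linarith [hα.2]) c d).const_mul _).lintegral_lt_top,
      by finiteness⟩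

theorem fracDerivP_L1_of_piecewiseHolder_general (α γ a b : ℝ) (f : ℝ → ℝ)
    (hα : α ∈ Set.Ioo (0 : ℝ) 1) (hγ : γ ∈ Set.Ioc α 1)
    (hf : PiecewiseHolder γ a b f) :
    (∫⁻ x in Ioo a b,
        (ENNReal.ofReal (|f x| * (x - a) ^ (-α))
          + ∫⁻ u in Ioo a x, ENNReal.ofReal (|f x - f u| * (x - u) ^ (-1 - α)))) < ⊤ := by
  obtain ⟨m, s, -, rfl, rfl, hs, hHolder, -⟩ := hf
  choose! L hL using hHolder
  have hmono : MonotoneOn s (Iic m) := (strictMonoOn_Iic_of_lt_succ hs).monotoneOn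
  have hcover := Ico_subset_biUnion_Ico m s
  obtain ⟨M, hM⟩ : ∃ M, ∀ y ∈ Ico (s 0) (s m), |f y| ≤ M := by
    have hbdd : Bornology.IsBounded (f '' ⋃ i ∈ Finset.range m, Ico (s i) (s (i + 1))) := by
      rw [image_iUnion₂, Bornology.isBounded_biUnion_finset]
      exact fun i hi => isBounded_image_Ico_of_holder (by linarith [hα.1, hγ.1])
        (hL i (Finset.mem_range.1 hi))
    obtain ⟨M, hM⟩ := isBounded_iff_forall_norm_le.1 hbdd
    exact ⟨M, fun y hy => hM _ (mem_image_of_mem f (hcover hy))⟩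
  refine (lintegral_mono_set (Ioo_subset_Ico_self.trans hcover)).trans_lt
    (lintegral_biUnion_finset_lt_top fun i hi => ?_)
  have hi : i < m := Finset.mem_range.1 hi
  have hsm : s (i + 1) ≤ s m := hmono (show i + 1 ∈ Iic m from hi) (le_refl m) hi
  exact lintegral_Ico_fracDerivMajorant_lt_top hα hγ.1
    (hmono (Nat.zero_le m : 0 ∈ Iic m) (show i ∈ Iic m from hi.le) (Nat.zero_le i))
    (fun y hy => hM y ⟨hy.1, hy.2.trans_le hsm⟩) (hL i hi)

theorem fracDerivP_L1_of_piecewiseHolder (α γ a b : ℝ) (f : ℝ → ℝ)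
    (hα : α ∈ Set.Ioo (0 : ℝ) 1) (hγ : γ ∈ Set.Ioc α 1)
    (ha : 0 ≤ a) (hab : a < b)
    (hf : PiecewiseHolder γ a b f) :
    (∫⁻ x in Ioo a b,
        (ENNReal.ofReal (|f x| * (x - a) ^ (-α))
          + ∫⁻ u in Ioo a x, ENNReal.ofReal (|f x - f u| * (x - u) ^ (-1 - α)))) < ⊤ :=
  fracDerivP_L1_of_piecewiseHolder_general α γ a b f hα hγ hf
end Piece
end

section
/- Let α ∈ (0,1) and 0 < u < t. Then ∫_0^u (u−s)^{−α} (t−s)^{−1−α} ds ≤ B(1−α, 2α) · (t−u)^{−2α}, where B denotes the Beta function. -/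
/-!
The substitution `s = t - (t - u) / x` maps `(0, 1)` onto `(-∞, u)` and turns the kernel
`(u - s)^(a-1) (t - s)^(-(a+b))` into `(t - u)^(-b) x^(b-1) (1 - x)^(a-1)`, so over `(-∞, u)` the
integral equals `B(a, b) (t - u)^(-b)` exactly. With `a = 1 - α`, `b = 2α` the claimed bound
follows by shrinking the domain to `(0, u)`.
-/

open MeasureTheory Set ProbabilityTheory
open scoped ENNReal

theorem lintegral_rpow_mul_one_sub_rpow {a b : ℝ} (ha : 0 < a) (hb : 0 < b) :
    ∫⁻ x in Ioo (0 : ℝ) 1, ENNReal.ofReal (x ^ (a - 1) * (1 - x) ^ (b - 1)) =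
      ENNReal.ofReal (beta a b) := by
  have hB := beta_pos ha hb
  have h := lintegral_betaPDF_eq_one ha hb
  rw [lintegral_betaPDF] at h
  simp_rw [mul_assoc, ENNReal.ofReal_mul (one_div_pos.2 hB).le] at h
  rw [lintegral_const_mul' _ _ ENNReal.ofReal_ne_top, mul_comm] at h
  rw [ENNReal.eq_inv_of_mul_eq_one_left h, one_div, ENNReal.ofReal_inv_of_pos hB, inv_inv]

theorem image_sub_div_Ioo_zero_one {c : ℝ} (hc : 0 < c) (t : ℝ) :
    (fun x => t - c / x) '' Ioo 0 1 = Iio (t - c) := by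
  ext s
  constructor
  · rintro ⟨x, ⟨hx0, hx1⟩, rfl⟩
    have : c < c / x := by rw [lt_div_iff₀ hx0]; nlinarith
    simp only [mem_Iio]; linarith
  · intro (hs : s < t - c)
    have hts : 0 < t - s := by linarith
    refine ⟨c / (t - s), ⟨by positivity, (div_lt_one hts).2 (by linarith)⟩, ?_⟩
    simp only [div_div_eq_mul_div, mul_div_cancel_left₀ _ hc.ne']
    ring

theorem injOn_sub_div_Ioi {c : ℝ} (hc : c ≠ 0) (t : ℝ) :
    InjOn (fun x => t - c / x) (Ioi 0) := by
  intro x (hx : 0 < x) y (hy : 0 < y) hxy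
  rw [sub_right_inj, div_eq_div_iff hx.ne' hy.ne'] at hxy
  exact (mul_left_cancel₀ hc hxy).symm

theorem hasDerivAt_sub_div {x : ℝ} (hx : x ≠ 0) (t c : ℝ) :
    HasDerivAt (fun x => t - c / x) (c / x ^ 2) x := by
  simpa [div_eq_mul_inv] using ((hasDerivAt_inv hx).const_mul c).const_sub t

theorem lintegral_Iio_eq_lintegral_Ioo_zero_one {u t : ℝ} (hut : u < t) (g : ℝ → ℝ≥0∞) :
    ∫⁻ s in Iio u, g s =
      ∫⁻ x in Ioo 0 1, ENNReal.ofReal ((t - u) / x ^ 2) * g (t - (t - u) / x) := by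
  have hc : 0 < t - u := sub_pos.2 hut
  rw [← sub_sub_cancel t u, ← image_sub_div_Ioo_zero_one hc t, sub_sub_cancel,
    lintegral_image_eq_lintegral_abs_deriv_mul measurableSet_Ioo
      (fun x hx => (hasDerivAt_sub_div hx.1.ne' t _).hasDerivWithinAt)
      ((injOn_sub_div_Ioi hc.ne' t).mono Ioo_subset_Ioi_self)]
  refine setLIntegral_congr_fun measurableSet_Ioo fun x hx => ?_
  rw [abs_of_pos (by have := hx.1; positivity)]

theorem div_sq_mul_rpow_div_sub_mul_rpow_div {a b c x : ℝ} (hc : 0 < c)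
    (hx : x ∈ Ioo (0 : ℝ) 1) :
    c / x ^ 2 * ((c / x - c) ^ (a - 1) * (c / x) ^ (-(a + b))) =
      c ^ (-b) * (x ^ (b - 1) * (1 - x) ^ (a - 1)) := by
  obtain ⟨hx0, hx1⟩ := hx
  have hcpow : c * c ^ (a - 1) * c ^ (-(a + b)) = c ^ (-b) := by
    rw [mul_comm c, ← Real.rpow_add_one hc.ne', ← Real.rpow_add hc]
    ring_nf
  have hxpow : x ^ 2 * x ^ (a - 1) * x ^ (-(a + b)) * x ^ (b - 1) = 1 := by
    rw [← Real.rpow_natCast, ← Real.rpow_add hx0, ← Real.rpow_add hx0, ← Real.rpow_add hx0]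
    convert Real.rpow_zero x using 2
    push_cast
    ring
  rw [show c / x - c = c * (1 - x) / x by field_simp, Real.div_rpow (by nlinarith) hx0.le,
    Real.div_rpow hc.le hx0.le, Real.mul_rpow hc.le (by linarith)]
  field_simp
  rw [hcpow]
  linear_combination (-c ^ (-b)) * hxpow

theorem ProbabilityTheory.beta_comm (a b : ℝ) : beta a b = beta b a := by
  rw [beta, beta, mul_comm, add_comm]

theorem lintegral_Iio_rpow_sub_mul_rpow_sub {a b u t : ℝ} (ha : 0 < a) (hb : 0 < b)
    (hut : u < t) :
    ∫⁻ s in Iio u, ENNReal.ofReal ((u - s) ^ (a - 1) * (t - s) ^ (-(a + b))) =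
      ENNReal.ofReal (beta a b * (t - u) ^ (-b)) := by
  have hc : 0 < t - u := sub_pos.2 hut
  have hsubst : ∀ x ∈ Ioo (0 : ℝ) 1,
      ENNReal.ofReal ((t - u) / x ^ 2) *
          ENNReal.ofReal ((u - (t - (t - u) / x)) ^ (a - 1) *
            (t - (t - (t - u) / x)) ^ (-(a + b))) =
        ENNReal.ofReal ((t - u) ^ (-b)) * ENNReal.ofReal (x ^ (b - 1) * (1 - x) ^ (a - 1)) := by
    intro x hx
    rw [← ENNReal.ofReal_mul (by have := hx.1; positivity),
      ← ENNReal.ofReal_mul (by positivity), ← div_sq_mul_rpow_div_sub_mul_rpow_div hc hx]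
    ring_nf
  rw [lintegral_Iio_eq_lintegral_Ioo_zero_one hut,
    setLIntegral_congr_fun measurableSet_Ioo hsubst,
    lintegral_const_mul' _ _ ENNReal.ofReal_ne_top, lintegral_rpow_mul_one_sub_rpow hb ha,
    ← ENNReal.ofReal_mul (by positivity), mul_comm, beta_comm]

theorem integral_kernel_le_beta_general (α u t : ℝ) (hα : α ∈ Set.Ioo (0 : ℝ) 1)
    (hut : u < t) :
    (∫⁻ s in Ioo (0 : ℝ) u, ENNReal.ofReal ((u - s) ^ (-α) * (t - s) ^ (-1 - α))) ≤
      ENNReal.ofReal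
        (Real.Gamma (1 - α) * Real.Gamma (2 * α) / Real.Gamma ((1 - α) + 2 * α) *
          (t - u) ^ (-(2 * α))) := by
  obtain ⟨hα0, hα1⟩ := hα
  have h := lintegral_Iio_rpow_sub_mul_rpow_sub (a := 1 - α) (b := 2 * α) (by linarith)
    (by linarith) hut
  rw [show 1 - α - 1 = -α by ring, show -(1 - α + 2 * α) = -1 - α by ring] at h
  exact (lintegral_mono_set Ioo_subset_Iio_self).trans_eq h

theorem integral_kernel_le_beta (α u t : ℝ) (hα : α ∈ Set.Ioo (0 : ℝ) 1)
    (hu : 0 < u) (hut : u < t) :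
    (∫⁻ s in Ioo (0 : ℝ) u, ENNReal.ofReal ((u - s) ^ (-α) * (t - s) ^ (-1 - α))) ≤
      ENNReal.ofReal
        (Real.Gamma (1 - α) * Real.Gamma (2 * α) / Real.Gamma ((1 - α) + 2 * α) *
          (t - u) ^ (-(2 * α))) :=
  integral_kernel_le_beta_general α u t hα hut
end
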